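/- There exist a finite alphabet X, finite sets P and N of pairs of trees over X (positive and negative pairs), a pseudo-metric default cost function c₀ on X ∪ {−}, and a regularization constant β > 0, such that the cost function c₁ learned by good edit similarity learning (i.e., minimizing E(d̃_c, P, N) over cost functions c and slack η ∈ [0, log 2], where d̃_c is the pseudo edit distance with edit script matrices fixed by c₀) satisfies: c₁ is not a pseudo-metric, E(d_{c₁}, P, N) > E(d̃_{c₁}, P, N), and E(d_{c₁}, P, N) > E(d_{c₀}, P, N). -/
import Mathlib


/-- A rooted ordered tree with labels from `X`. -/
inductive PTree (X : Type) : Type where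
  | node : X → List (PTree X) → PTree X

namespace PTree

variable {X : Type}

mutual
  /-- The labels of a tree in pre-order. -/
  def preorder : PTree X → List X
    | .node l cs => l :: preorderF cs
  /-- The labels of a forest in pre-order. -/
  def preorderF : List (PTree X) → List X
    | [] => []
    | t :: ts => preorder t ++ preorderF ts
end

/-- The size of a tree (number of nodes). -/
def size (t : PTree X) : ℕ := (preorder t).length

/-- `Deletes f g l` holds iff the forest `g` is obtained from the forest `f` by
deleting one node labeled `l`, attaching its children in its place. -/
inductive Deletes : List (PTree X) → List (PTree X) → X → Prop where
  | here (l : X) (cs rest : List (PTree X)) :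
      Deletes (.node l cs :: rest) (cs ++ rest) l
  | child {cs cs' : List (PTree X)} {l : X} (z : X) (rest : List (PTree X)) :
      Deletes cs cs' l → Deletes (.node z cs :: rest) (.node z cs' :: rest) l
  | skip {rest rest' : List (PTree X)} {l : X} (t : PTree X) :
      Deletes rest rest' l → Deletes (t :: rest) (t :: rest') l

/-- `Replaces f g l l'` holds iff the forest `g` is obtained from the forest `f` by
changing the label `l` of one node into `l'`. -/
inductive Replaces : List (PTree X) → List (PTree X) → X → X → Prop where
  | here (l l' : X) (cs rest : List (PTree X)) :
      Replaces (.node l cs :: rest) (.node l' cs :: rest) l l'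
  | child {cs cs' : List (PTree X)} {l l' : X} (z : X) (rest : List (PTree X)) :
      Replaces cs cs' l l' → Replaces (.node z cs :: rest) (.node z cs' :: rest) l l'
  | skip {rest rest' : List (PTree X)} {l l' : X} (t : PTree X) :
      Replaces rest rest' l l' → Replaces (t :: rest) (t :: rest') l l'

/-- `EditStep c f g r` holds iff one tree edit (a deletion, an insertion, or a
replacement) of cost `r` under the cost function `c` transforms the forest `f`
into the forest `g`. The gap symbol `−` is represented by `none`:
deleting label `l` costs `c (some l) none`, inserting label `l` costs
`c none (some l)`, and replacing label `l` by `l'` costs `c (some l) (some l')`.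
An insertion is exactly the inverse of a deletion (the inserted node may adopt
a consecutive run of existing siblings as children). -/
inductive EditStep (c : Option X → Option X → ℝ) :
    List (PTree X) → List (PTree X) → ℝ → Prop where
  | del {f g : List (PTree X)} {l : X} :
      Deletes f g l → EditStep c f g (c (some l) none)
  | ins {f g : List (PTree X)} {l : X} :
      Deletes g f l → EditStep c f g (c none (some l))
  | rep {f g : List (PTree X)} {l l' : X} :
      Replaces f g l l' → EditStep c f g (c (some l) (some l'))

/-- `Script c f g r` holds iff some edit script (finite sequence of edits) of
total cost `r` under the cost function `c` transforms the forest `f` into the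
forest `g`. -/
inductive Script (c : Option X → Option X → ℝ) :
    List (PTree X) → List (PTree X) → ℝ → Prop where
  | nil (f : List (PTree X)) : Script c f f 0
  | cons {f g h : List (PTree X)} {r s : ℝ} :
      EditStep c f g r → Script c g h s → Script c f h (r + s)

/-- The tree edit distance `d_c`: the infimum of the costs of all edit scripts
transforming the tree `x` into the tree `y`. -/
noncomputable def editDist (c : Option X → Option X → ℝ) (x y : PTree X) : ℝ :=
  sInf {r : ℝ | Script c [x] [y] r}

mutual
  /-- In pre-order: for every node of the tree, the size of the subtree rooted
  at that node. -/
  def subtreeSizes : PTree X → List ℕ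
    | .node l cs => size (.node l cs) :: subtreeSizesF cs
  /-- In pre-order: for every node of the forest, the size of the subtree rooted
  at that node. -/
  def subtreeSizesF : List (PTree X) → List ℕ
    | [] => []
    | t :: ts => subtreeSizes t ++ subtreeSizesF ts
end

/-- The label of the `i`-th node of `t` in pre-order (`0`-based). -/
def label (t : PTree X) (i : Fin (size t)) : X := (preorder t).get i

/-- The `i`-th node of `t` (in `0`-based pre-order) is an ancestor of the
`j`-th node, characterized via pre-order indices and subtree sizes. -/
def IsAncestor (t : PTree X) (i j : ℕ) : Prop :=
  i < j ∧ j < i + (subtreeSizes t).getD i 0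

/-- A tree mapping between `x` and `y`: a set of pairs of (`0`-based pre-order)
node indices such that every index occurs in at most one pair, the mapping is
order-preserving, and it is ancestor-preserving. -/
def IsTreeMapping (x y : PTree X) (M : Finset (Fin (size x) × Fin (size y))) : Prop :=
  ∀ p ∈ M, ∀ q ∈ M,
    (p.1 = q.1 ↔ p.2 = q.2) ∧ (p.1 < q.1 ↔ p.2 < q.2) ∧
    (IsAncestor x ↑p.1 ↑q.1 ↔ IsAncestor y ↑p.2 ↑q.2)

/-- The cost of a tree mapping `M` under the cost function `c`: matched pairs
of nodes pay the replacement cost, unmatched nodes of `x` pay the deletion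
cost, unmatched nodes of `y` pay the insertion cost. -/
def mappingCost (c : Option X → Option X → ℝ) (x y : PTree X)
    (M : Finset (Fin (size x) × Fin (size y))) : ℝ :=
  (∑ p ∈ M, c (some (label x p.1)) (some (label y p.2)))
    + (∑ i ∈ Finset.univ.filter (fun i : Fin (size x) => ∀ p ∈ M, p.1 ≠ i),
        c (some (label x i)) none)
    + (∑ j ∈ Finset.univ.filter (fun j : Fin (size y) => ∀ p ∈ M, p.2 ≠ j),
        c none (some (label y j)))

/-- The mapping distance `D_c` (the quantity computed by the dynamic
programming scheme of Zhang and Shasha): the minimal cost of a tree mapping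
between `x` and `y`. -/
noncomputable def mapDist (c : Option X → Option X → ℝ) (x y : PTree X) : ℝ :=
  sInf {r : ℝ | ∃ M, IsTreeMapping x y M ∧ mappingCost c x y M = r}

end PTree

/-- A pseudo-metric on a type `S`: non-negative, symmetric, zero on the
diagonal, and satisfying the triangle inequality. -/
def IsPseudoMetric {S : Type} (c : S → S → ℝ) : Prop :=
  (∀ a b, 0 ≤ c a b) ∧ (∀ a b, c a b = c b a) ∧ (∀ a, c a a = 0) ∧
    (∀ a b d, c a d ≤ c a b + c b d)

namespace PTree

/-- The GESL loss `E(d, P, N)` for a distance function `d` between trees over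
the finite alphabet `X`, with cost function `c` (for the regularization term
`β·‖c‖²`), positive pairs `P`, negative pairs `N`, slack `η`, and
regularization constant `β`:
`E = β·‖c‖² + Σ_{(x̄,ȳ)∈P} [d(x̄,ȳ) − η]₊ + Σ_{(x̄,ȳ)∈N} [log 2 + η − d(x̄,ȳ)]₊`. -/
noncomputable def gesLoss {X : Type} [Fintype X] (β : ℝ)
    (c : Option X → Option X → ℝ) (d : PTree X → PTree X → ℝ)
    (P N : Finset (PTree X × PTree X)) (η : ℝ) : ℝ :=
  β * (∑ a : Option X, ∑ b : Option X, (c a b) ^ 2)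
    + (∑ p ∈ P, max 0 (d p.1 p.2 - η))
    + (∑ p ∈ N, max 0 (Real.log 2 + η - d p.1 p.2))

/-- The GESL loss `E(d, P, N)` with the slack `η` optimized over `[0, log 2]`. -/
noncomputable def gesLossOpt {X : Type} [Fintype X] (β : ℝ)
    (c : Option X → Option X → ℝ) (d : PTree X → PTree X → ℝ)
    (P N : Finset (PTree X × PTree X)) : ℝ :=
  sInf {E : ℝ | ∃ η ∈ Set.Icc (0 : ℝ) (Real.log 2), gesLoss β c d P N η = E}

end PTree

namespace GESLAux
open PTree

noncomputable def cOne : Option Unit → Option Unit → ℝ := fun a b =>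
  match a, b with
  | some _, none => 1/8
  | none, some _ => 1/4
  | _, _ => 0

abbrev t1 : PTree Unit := .node () []
abbrev t2 : PTree Unit := .node () [t1]

lemma preorderF_append {X : Type} (a b : List (PTree X)) :
    preorderF (a ++ b) = preorderF a ++ preorderF b := by
  induction a with
  | nil => rfl
  | cons t ts ih => simp [preorderF, ih]

lemma deletes_len {X : Type} {f g : List (PTree X)} {l : X} (h : Deletes f g l) :
    (preorderF f).length = (preorderF g).length + 1 := by
  induction h with
  | here l cs rest => simp [preorderF, preorder, preorderF_append]; try omega
  | child z rest _ ih => simp [preorderF, preorder]; try omega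
  | skip t _ ih => simp [preorderF]; try omega

lemma replaces_len {X : Type} {f g : List (PTree X)} {l l' : X} (h : Replaces f g l l') :
    (preorderF f).length = (preorderF g).length := by
  induction h with
  | here l l' cs rest => simp [preorderF, preorder]; try omega
  | child z rest _ ih => simp [preorderF, preorder]; try omega
  | skip t _ ih => simp [preorderF]; try omega

lemma script_c0 {X : Type} {f g : List (PTree X)} {r : ℝ}
    (h : Script (fun _ _ => (0:ℝ)) f g r) : r = 0 := by
  induction h with
  | nil => rfl
  | cons step _ ih => cases step <;> simp [ih]

lemma script_c1_lb {f g : List (PTree Unit)} {r : ℝ} (h : Script cOne f g r) :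
    ((preorderF g).length : ℝ) - ((preorderF f).length : ℝ) ≤ 4 * r := by
  induction h with
  | nil => simp
  | @cons fa ga ha ra sa step _ ih =>
    cases step with
    | @del l hd =>
      have h1' : ((preorderF fa).length : ℝ) = ((preorderF ga).length : ℝ) + 1 := by
        exact_mod_cast deletes_len hd
      have hc : cOne (some l) none = 1/8 := rfl
      rw [hc]; linarith
    | @ins l hd =>
      have h1' : ((preorderF ga).length : ℝ) = ((preorderF fa).length : ℝ) + 1 := by
        exact_mod_cast deletes_len hd
      have hc : cOne none (some l) = 1/4 := rfl
      rw [hc]; linarith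
    | @rep l l2 hr =>
      have h1' : ((preorderF fa).length : ℝ) = ((preorderF ga).length : ℝ) := by
        exact_mod_cast replaces_len hr
      have hc : cOne (some l) (some l2) = 0 := rfl
      rw [hc]; linarith

lemma script_t1_t2 (c : Option Unit → Option Unit → ℝ) :
    Script c [t1] [t2] (c none (some ()) + 0) :=
  Script.cons (EditStep.ins (Deletes.here () [t1] [])) (Script.nil _)

lemma editDist_c0 : editDist (fun _ _ => (0:ℝ)) t1 t2 = 0 := by
  unfold editDist
  have h1 : (0:ℝ) ∈ {r : ℝ | Script (fun _ _ => (0:ℝ)) [t1] [t2] r} := by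
    have := script_t1_t2 (fun _ _ => (0:ℝ))
    simpa using this
  have hset : {r : ℝ | Script (fun _ _ => (0:ℝ)) [t1] [t2] r} = {0} := by
    ext r
    simp only [Set.mem_setOf_eq, Set.mem_singleton_iff]
    exact ⟨script_c0, fun h => h ▸ h1⟩
  rw [hset]; exact csInf_singleton 0

lemma editDist_c1_le : editDist cOne t1 t2 ≤ 1/4 := by
  unfold editDist
  apply csInf_le
  · exact ⟨0, fun r hr => by
      have := script_c1_lb hr
      have h2 : ((preorderF [t2]).length : ℝ) = 2 := by norm_num [preorderF, preorder]
      have h1 : ((preorderF [t1]).length : ℝ) = 1 := by norm_num [preorderF, preorder]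
      rw [h2, h1] at this; linarith⟩
  · have := script_t1_t2 cOne
    have hc : cOne none (some ()) + 0 = 1/4 := by norm_num [cOne]
    exact Set.mem_setOf_eq ▸ (hc ▸ this)

lemma sum_sq (c : Option Unit → Option Unit → ℝ) :
    ∑ a : Option Unit, ∑ b : Option Unit, (c a b)^2
      = (c none none)^2 + (c none (some ()))^2 + (c (some ()) none)^2
        + (c (some ()) (some ()))^2 := by
  simp [Fintype.sum_option]; ring

lemma mapCost_empty (c : Option Unit → Option Unit → ℝ) (x y : PTree Unit) :
    mappingCost c x y ∅ = (size x : ℝ) * c (some ()) none + (size y : ℝ) * c none (some ()) := by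
  unfold mappingCost
  have hx : ∀ i : Fin (size x), c (some (label x i)) none = c (some ()) none := fun _ => rfl
  have hy : ∀ j : Fin (size y), c none (some (label y j)) = c none (some ()) := fun _ => rfl
  simp [hx, hy, Finset.sum_const, nsmul_eq_mul, mul_comm]

lemma isTreeMapping_empty {X : Type} (x y : PTree X) : IsTreeMapping x y ∅ :=
  fun p hp => absurd hp (Finset.notMem_empty p)

lemma mapCost_c0 {X : Type} (x y : PTree X) (M : Finset (Fin (size x) × Fin (size y))) :
    mappingCost (fun _ _ => (0:ℝ)) x y M = 0 := by
  simp [mappingCost]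

lemma mapDist_c0 {X : Type} (x y : PTree X) : mapDist (fun _ _ => (0:ℝ)) x y = 0 := by
  unfold mapDist
  have hset : {r : ℝ | ∃ M, IsTreeMapping x y M ∧ mappingCost (fun _ _ => (0:ℝ)) x y M = r}
      = {0} := by
    ext r
    simp only [Set.mem_setOf_eq, Set.mem_singleton_iff]
    constructor
    · rintro ⟨M, _, hc⟩; rw [mapCost_c0] at hc; exact hc.symm
    · rintro rfl; exact ⟨∅, isTreeMapping_empty x y, mapCost_c0 x y ∅⟩
  rw [hset]; exact csInf_singleton 0

lemma gesLoss_nonneg {X : Type} [Fintype X] {β : ℝ} (hβ : 0 ≤ β)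
    (c : Option X → Option X → ℝ) (d : PTree X → PTree X → ℝ)
    (P N : Finset (PTree X × PTree X)) (η : ℝ) : 0 ≤ gesLoss β c d P N η := by
  unfold gesLoss
  have h1 : 0 ≤ β * (∑ a : Option X, ∑ b : Option X, (c a b)^2) :=
    mul_nonneg hβ (Finset.sum_nonneg fun _ _ => Finset.sum_nonneg fun _ _ => sq_nonneg _)
  have h2 : 0 ≤ ∑ p ∈ P, max 0 (d p.1 p.2 - η) :=
    Finset.sum_nonneg fun _ _ => le_max_left _ _
  have h3 : 0 ≤ ∑ p ∈ N, max 0 (Real.log 2 + η - d p.1 p.2) :=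
    Finset.sum_nonneg fun _ _ => le_max_left _ _
  linarith

lemma gesLoss_eval (β : ℝ) (c : Option Unit → Option Unit → ℝ)
    (d : PTree Unit → PTree Unit → ℝ) (η : ℝ) :
    gesLoss β c d (∅ : Finset (PTree Unit × PTree Unit)) {(t1, t2)} η
      = β * (∑ a : Option Unit, ∑ b : Option Unit, (c a b)^2)
        + max 0 (Real.log 2 + η - d t1 t2) := by
  unfold gesLoss
  simp

lemma log_two_gt : (5/8 : ℝ) < Real.log 2 := by
  have := Real.log_two_gt_d9
  linarith

end GESLAux


/-- There exist a finite alphabet `X`, finite sets `P`, `N`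
of positive and negative pairs of trees over `X`, a pseudo-metric default cost
function `c₀` on `X ∪ {−}`, and a regularization constant `β > 0`, such that
the cost function `c₁` learned by good edit similarity learning — i.e.,
minimizing `E(d̃_c, P, N)` over cost functions `c` and slack `η ∈ [0, log 2]`,
where the pseudo edit distance `d̃_c` is given by fixed edit script matrices
under `c₀`: for each pair of trees, `Msel x y` is a tree mapping of minimal
cost under `c₀` (representing the matrix `P_{c₀}(x̄, ȳ)` of a cheapest edit
script under `c₀`: matched pairs are replacements, unmatched nodes deletions
resp. insertions), and `d̃_c(x̄, ȳ)` is the cost of `Msel x̄ ȳ` under `c` —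
satisfies: `c₁` is not a pseudo-metric, `E(d_{c₁}, P, N) > E(d̃_{c₁}, P, N)`,
and `E(d_{c₁}, P, N) > E(d_{c₀}, P, N)`. -/
theorem gesl_learned_cost_can_degenerate :
    ∃ (X : Type) (inst : Fintype X) (P N : Finset (PTree X × PTree X))
      (c₀ : Option X → Option X → ℝ) (β : ℝ)
      (Msel : (x y : PTree X) → Finset (Fin (PTree.size x) × Fin (PTree.size y)))
      (c₁ : Option X → Option X → ℝ) (η₁ : ℝ),
      IsPseudoMetric c₀ ∧ 0 < β ∧
      (∀ x y : PTree X, PTree.IsTreeMapping x y (Msel x y) ∧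
        PTree.mappingCost c₀ x y (Msel x y) = PTree.mapDist c₀ x y) ∧
      η₁ ∈ Set.Icc (0 : ℝ) (Real.log 2) ∧
      (∀ (c : Option X → Option X → ℝ), ∀ η ∈ Set.Icc (0 : ℝ) (Real.log 2),
        @PTree.gesLoss X inst β c₁
            (fun x y => PTree.mappingCost c₁ x y (Msel x y)) P N η₁
          ≤ @PTree.gesLoss X inst β c
            (fun x y => PTree.mappingCost c x y (Msel x y)) P N η) ∧
      ¬ IsPseudoMetric c₁ ∧
      @PTree.gesLossOpt X inst β c₁ (PTree.editDist c₁) P N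
        > @PTree.gesLossOpt X inst β c₁
            (fun x y => PTree.mappingCost c₁ x y (Msel x y)) P N ∧
      @PTree.gesLossOpt X inst β c₁ (PTree.editDist c₁) P N
        > @PTree.gesLossOpt X inst β c₀ (PTree.editDist c₀) P N := by
  classical
  open GESLAux in
  refine ⟨Unit, inferInstance, ∅, {(t1, t2)}, (fun _ _ => 0), 4, (fun _ _ => ∅),
    cOne, 0, ?_, by norm_num, ?_, ?_, ?_, ?_, ?_, ?_⟩
  · exact ⟨fun _ _ => le_rfl, fun _ _ => rfl, fun _ => rfl, fun _ _ _ => by norm_num⟩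
  · exact fun x y => ⟨isTreeMapping_empty x y, by rw [mapCost_c0, mapDist_c0]⟩
  · exact ⟨le_rfl, Real.log_nonneg one_le_two⟩
  · -- minimality
    intro c η hη
    have hd1 : PTree.mappingCost cOne t1 t2 ∅ = 5/8 := by
      rw [mapCost_empty]
      have e1 : PTree.size t1 = 1 := rfl
      have e2 : PTree.size t2 = 2 := rfl
      have e3 : cOne (some ()) none = 1/8 := rfl
      have e4 : cOne none (some ()) = 1/4 := rfl
      rw [e1, e2, e3, e4]; norm_num
    have hLHS : PTree.gesLoss 4 cOne (fun x y => PTree.mappingCost cOne x y ∅)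
        (∅ : Finset (PTree Unit × PTree Unit)) {(t1, t2)} 0 = Real.log 2 - 5/16 := by
      rw [gesLoss_eval, sum_sq, hd1]
      have e1 : cOne (some ()) none = 1/8 := rfl
      have e2 : cOne none (some ()) = 1/4 := rfl
      have e3 : cOne none none = 0 := rfl
      have e4 : cOne (some ()) (some ()) = 0 := rfl
      rw [e1, e2, e3, e4, max_eq_right (by linarith [log_two_gt])]
      ring
    rw [hLHS, gesLoss_eval, sum_sq, mapCost_empty]
    have e1 : PTree.size t1 = 1 := rfl
    have e2 : PTree.size t2 = 2 := rfl
    rw [e1, e2]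
    have hmax := le_max_right (0:ℝ)
      (Real.log 2 + η - ((1:ℕ) * c (some ()) none + (2:ℕ) * c none (some ())))
    have h1 := hη.1
    push_cast at hmax ⊢
    nlinarith [sq_nonneg (c none none), sq_nonneg (c (some ()) (some ())),
      sq_nonneg (c (some ()) none - 1/8), sq_nonneg (c none (some ()) - 1/4)]
  · rintro ⟨-, hsym, -, -⟩
    have := hsym (some ()) none
    have e1 : cOne (some ()) none = 1/8 := rfl
    have e2 : cOne none (some ()) = 1/4 := rfl
    rw [e1, e2] at this
    norm_num at this
  · -- edit > pseudo
    have hA : Real.log 2 + 1/16 ≤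
        PTree.gesLossOpt 4 cOne (PTree.editDist cOne) ∅ {(t1, t2)} := by
      unfold PTree.gesLossOpt
      refine le_csInf ⟨_, 0, ⟨le_rfl, Real.log_nonneg one_le_two⟩, rfl⟩ ?_
      rintro b ⟨η, hη, rfl⟩
      rw [gesLoss_eval, sum_sq]
      have e1 : cOne (some ()) none = 1/8 := rfl
      have e2 : cOne none (some ()) = 1/4 := rfl
      have e3 : cOne none none = 0 := rfl
      have e4 : cOne (some ()) (some ()) = 0 := rfl
      rw [e1, e2, e3, e4]
      have hmax := le_max_right (0:ℝ) (Real.log 2 + η - PTree.editDist cOne t1 t2)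
      have hD := editDist_c1_le
      have h1 := hη.1
      nlinarith
    have hB : PTree.gesLossOpt 4 cOne
        (fun x y => PTree.mappingCost cOne x y ∅) ∅ {(t1, t2)} ≤ Real.log 2 - 5/16 := by
      unfold PTree.gesLossOpt
      refine csInf_le ⟨0, ?_⟩ ?_
      · rintro b ⟨η, hη, rfl⟩
        exact gesLoss_nonneg (by norm_num) _ _ _ _ _
      · refine ⟨0, ⟨le_rfl, Real.log_nonneg one_le_two⟩, ?_⟩
        rw [gesLoss_eval, sum_sq]
        have hd1 : PTree.mappingCost cOne t1 t2 ∅ = 5/8 := by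
          rw [mapCost_empty]
          have e1 : PTree.size t1 = 1 := rfl
          have e2 : PTree.size t2 = 2 := rfl
          have e3 : cOne (some ()) none = 1/8 := rfl
          have e4 : cOne none (some ()) = 1/4 := rfl
          rw [e1, e2, e3, e4]; norm_num
        have e1 : cOne (some ()) none = 1/8 := rfl
        have e2 : cOne none (some ()) = 1/4 := rfl
        have e3 : cOne none none = 0 := rfl
        have e4 : cOne (some ()) (some ()) = 0 := rfl
        rw [hd1, e1, e2, e3, e4, max_eq_right (by linarith [log_two_gt])]
        ring
    linarith [log_two_gt]
  · -- edit c1 > edit c0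
    have hA : Real.log 2 + 1/16 ≤
        PTree.gesLossOpt 4 cOne (PTree.editDist cOne) ∅ {(t1, t2)} := by
      unfold PTree.gesLossOpt
      refine le_csInf ⟨_, 0, ⟨le_rfl, Real.log_nonneg one_le_two⟩, rfl⟩ ?_
      rintro b ⟨η, hη, rfl⟩
      rw [gesLoss_eval, sum_sq]
      have e1 : cOne (some ()) none = 1/8 := rfl
      have e2 : cOne none (some ()) = 1/4 := rfl
      have e3 : cOne none none = 0 := rfl
      have e4 : cOne (some ()) (some ()) = 0 := rfl
      rw [e1, e2, e3, e4]
      have hmax := le_max_right (0:ℝ) (Real.log 2 + η - PTree.editDist cOne t1 t2)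
      have hD := editDist_c1_le
      have h1 := hη.1
      nlinarith
    have hC : PTree.gesLossOpt 4 (fun _ _ => (0:ℝ))
        (PTree.editDist (fun _ _ => (0:ℝ))) ∅ {(t1, t2)} ≤ Real.log 2 := by
      unfold PTree.gesLossOpt
      refine csInf_le ⟨0, ?_⟩ ?_
      · rintro b ⟨η, hη, rfl⟩
        exact gesLoss_nonneg (by norm_num) _ _ _ _ _
      · refine ⟨0, ⟨le_rfl, Real.log_nonneg one_le_two⟩, ?_⟩
        rw [gesLoss_eval, sum_sq, editDist_c0,
          max_eq_right (by linarith [Real.log_nonneg (one_le_two (α := ℝ))])]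
        norm_num
    linarith
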